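/- Pairwise position probabilities of the CorgiPile shuffle. Let N ≥ 2 and nb ≥ 2. For any two distinct positions k ≠ k' in {1,…,nb} and any two distinct indices i ≠ j in {1,…,m}: (1) if i and j lie in the same block B_l, then P(ψ(k) = i and ψ(k') = j) = 1/(N·b·(nb−1)); (2) if i ∈ B_l and j ∈ B_{l'} with l ≠ l', then P(ψ(k) = i and ψ(k') = j) = (n−1)/(N·b·(N−1)·(nb−1)). Moreover, P(ψ(k) = i and ψ(k') = i) = 0. -/

import Mathlib

/-!
Conditioning on the chosen set of blocks splits the shuffles into `C(N, n)` classes of `(nb)!`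
bijections each. Within a class whose blocks contain those of `i` and `j`, exactly `(nb - 2)!`
bijections send `k ↦ i` and `k' ↦ j`; otherwise none do. So the probability is
`#{𝓑 ⊇ R} / C(N, n) · 1 / (nb (nb - 1))` with `R = {blk i, blk j}`. Passing to complements gives
`#{𝓑 ⊇ R} = C(N - r, N - n)` for `r = #R`, so the first factor is `C(n, r) / C(N, r)`: this is
`n / N` when `i` and `j` share a block and `n (n - 1) / (N (N - 1))` when they do not.
-/

open Finset

noncomputable section

/-- A CorgiPile shuffle: a set of `n` blocks (out of `N`) together with an injection
from the `n*b` positions onto the set of indices belonging to the chosen blocks. -/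
def CorgiShuffle (N n b : ℕ) (blk : Fin (N * b) → Fin N) : Type :=
  { p : Finset (Fin N) × (Fin (n * b) → Fin (N * b)) //
      p.1.card = n ∧ Function.Injective p.2 ∧
      (∀ k, blk (p.2 k) ∈ p.1) ∧
      (∀ i, blk i ∈ p.1 → ∃ k, p.2 k = i) }

noncomputable instance (N n b : ℕ) (blk : Fin (N * b) → Fin N) :
    Fintype (CorgiShuffle N n b blk) := by
  unfold CorgiShuffle; exact Fintype.ofFinite _

/-- The `l`-th block, as a finset of indices. -/
def blockSet {N b : ℕ} (blk : Fin (N * b) → Fin N) (l : Fin N) : Finset (Fin (N * b)) :=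
  Finset.univ.filter (fun i => blk i = l)

namespace Equiv

theorem card_subtype_forall_apply_eq {ι α β : Type*} [Fintype ι] [Fintype α] [Fintype β]
    [DecidableEq α] [DecidableEq β] (h : Fintype.card α = Fintype.card β) (f : ι ↪ α)
    (g : ι ↪ β) :
    Fintype.card {e : α ≃ β // ∀ i, e (f i) = g i}
      = (Fintype.card α - Fintype.card ι).factorial := by
  classical
  let e₀ : Set.range f ≃ Set.range g :=
    (Equiv.ofInjective f f.injective).symm.trans (Equiv.ofInjective g g.injective)
  have he₀ (i : ι) : (e₀ ⟨f i, i, rfl⟩ : β) = g i := by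
    simp [e₀]
  have hext :
      {e : α ≃ β // ∀ i, e (f i) = g i} ≃ {e : α ≃ β // ∀ z : Set.range f, e z = e₀ z} :=
    Equiv.subtypeEquivRight fun e =>
      ⟨fun he ⟨_, i, hi⟩ => by subst hi; rw [he, he₀], fun he i => by rw [he ⟨f i, i, rfl⟩, he₀]⟩
  have hf : Fintype.card ((Set.range f)ᶜ : Set α) = Fintype.card α - Fintype.card ι := by
    rw [Fintype.card_compl_set, Set.card_range_of_injective f.injective]
  have hg : Fintype.card ((Set.range g)ᶜ : Set β) = Fintype.card α - Fintype.card ι := by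
    rw [Fintype.card_compl_set, Set.card_range_of_injective g.injective, h]
  rw [Fintype.card_congr (hext.trans (Equiv.Set.compl e₀)),
    Fintype.card_equiv (Fintype.equivOfCardEq (hf.trans hg.symm)), hf]

theorem card_subtype_apply_eq_and_apply_eq {α β : Type*} [Fintype α] [Fintype β]
    [DecidableEq α] [DecidableEq β] (h : Fintype.card α = Fintype.card β) {a a' : α} {x y : β}
    (ha : a ≠ a') (hx : x ≠ y) :
    Fintype.card {e : α ≃ β // e a = x ∧ e a' = y} = (Fintype.card α - 2).factorial := by
  simpa [Fin.forall_fin_two] using card_subtype_forall_apply_eq h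
    ⟨_, injective_pair_iff_ne.2 ha⟩ ⟨_, injective_pair_iff_ne.2 hx⟩

theorem card_filter_val_apply_eq_and_val_apply_eq {α β : Type*} [Fintype α] [Fintype β]
    [DecidableEq α] [DecidableEq β] {p : β → Prop} [DecidablePred p]
    (h : Fintype.card α = Fintype.card {x // p x}) {a a' : α} {x y : β} (ha : a ≠ a')
    (hx : x ≠ y) :
    #{e : α ≃ {x // p x} | (e a : β) = x ∧ (e a' : β) = y}
      = if p x ∧ p y then (Fintype.card α - 2).factorial else 0 := by
  split_ifs with hp
  · rw [← Fintype.card_subtype, ← card_subtype_apply_eq_and_apply_eq h (x := ⟨x, hp.1⟩)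
      (y := ⟨y, hp.2⟩) ha (by simpa [Subtype.ext_iff] using hx)]
    simp only [Subtype.ext_iff]
  · rw [Finset.card_eq_zero, filter_eq_empty_iff]
    rintro e - ⟨rfl, rfl⟩
    exact hp ⟨(e a).2, (e a').2⟩

end Equiv

theorem Nat.choose_mul_choose_eq_choose_mul_choose_sub_sub {N n r : ℕ} (hn : n ≤ N) :
    N.choose n * n.choose r = N.choose r * (N - r).choose (N - n) := by
  rcases le_or_gt r n with hr | hr
  · rw [Nat.choose_mul hr,
      Nat.choose_symm_of_eq_add (n := N - r) (a := n - r) (b := N - n) (by omega)]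
  · rcases le_or_gt r N with hrN | hrN
    · rw [Nat.choose_eq_zero_of_lt hr, Nat.choose_eq_zero_of_lt (by omega : N - r < N - n),
        mul_zero, mul_zero]
    · rw [Nat.choose_eq_zero_of_lt hr, Nat.choose_eq_zero_of_lt hrN, mul_zero, zero_mul]

theorem Finset.card_filter_powersetCard_univ_subset {α : Type*} [Fintype α] [DecidableEq α]
    (R : Finset α) {n : ℕ} (hn : n ≤ Fintype.card α) :
    #{S ∈ powersetCard n univ | R ⊆ S} = (Fintype.card α - #R).choose (Fintype.card α - n) := by
  rw [← card_compl, ← card_powersetCard]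
  refine card_nbij' compl compl (fun S hS => ?_) (fun T hT => ?_) (fun S _ => compl_compl S)
    (fun T _ => compl_compl T)
  · simp only [coe_filter, mem_powersetCard, Set.mem_ofPred_eq, mem_coe] at hS ⊢
    exact ⟨compl_subset_compl.2 hS.2, by rw [card_compl, hS.1.2]⟩
  · simp only [coe_filter, mem_powersetCard, Set.mem_ofPred_eq, mem_coe] at hT ⊢
    refine ⟨⟨subset_univ _, ?_⟩, le_compl_comm.1 hT.1⟩
    rw [card_compl, hT.2]; omega

namespace CorgiShuffle

variable {N n b : ℕ} {blk : Fin (N * b) → Fin N}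

def equivSigma :
    CorgiShuffle N n b blk ≃
      Σ S : powersetCard n (univ : Finset (Fin N)), Fin (n * b) ≃ {x // blk x ∈ S.1} where
  toFun ω :=
    ⟨⟨ω.1.1, mem_powersetCard.2 ⟨subset_univ _, ω.2.1⟩⟩,
      Equiv.ofBijective (fun k => ⟨ω.1.2 k, ω.2.2.2.1 k⟩)
        ⟨fun _ _ h => ω.2.2.1 (congrArg Subtype.val h),
          fun x => (ω.2.2.2.2 x.1 x.2).imp fun _ => Subtype.ext⟩⟩
  invFun σ :=
    ⟨(σ.1.1, fun k => σ.2 k), (mem_powersetCard.1 σ.1.2).2,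
      fun _ _ h => σ.2.injective (Subtype.ext h), fun k => (σ.2 k).2,
      fun x hx => ⟨σ.2.symm ⟨x, hx⟩, by simp⟩⟩
  left_inv _ := rfl
  right_inv _ := Sigma.ext rfl (heq_of_eq (Equiv.ext fun _ => rfl))

theorem card_subtype_blk_mem (hblk : ∀ l, #(blockSet blk l) = b) (S : Finset (Fin N)) :
    Fintype.card {x // blk x ∈ S} = #S * b := by
  rw [Fintype.card_subtype,
    card_eq_sum_card_fiberwise (f := blk) (t := S) fun x hx => by simpa using hx]
  refine sum_const_nat fun l hl => (congrArg card ?_).trans (hblk l)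
  ext x
  simp only [blockSet, mem_filter, mem_univ, true_and, and_iff_right_iff_imp]
  rintro rfl
  exact hl

theorem card_fin_eq_card_subtype_blk_mem (hblk : ∀ l, #(blockSet blk l) = b)
    (S : powersetCard n (univ : Finset (Fin N))) :
    Fintype.card (Fin (n * b)) = Fintype.card {x // blk x ∈ S.1} := by
  rw [Fintype.card_fin, card_subtype_blk_mem hblk, (mem_powersetCard.1 S.2).2]

theorem card_eq (hblk : ∀ l, #(blockSet blk l) = b) :
    Fintype.card (CorgiShuffle N n b blk) = N.choose n * (n * b).factorial := by
  have hfiber (S : powersetCard n (univ : Finset (Fin N))) :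
      Fintype.card (Fin (n * b) ≃ {x // blk x ∈ S.1}) = (n * b).factorial := by
    rw [Fintype.card_equiv (Fintype.equivOfCardEq (card_fin_eq_card_subtype_blk_mem hblk S)),
      Fintype.card_fin]
  rw [Fintype.card_congr equivSigma, Fintype.card_sigma]
  simp only [hfiber, sum_const, card_univ, Fintype.card_coe, card_powersetCard,
    Fintype.card_fin, smul_eq_mul]

theorem card_filter_apply_eq_and_apply_eq (hblk : ∀ l, #(blockSet blk l) = b)
    {k k' : Fin (n * b)} (hk : k ≠ k') {i j : Fin (N * b)} (hij : i ≠ j) :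
    #{ω : CorgiShuffle N n b blk | ω.val.2 k = i ∧ ω.val.2 k' = j}
      = #{S ∈ powersetCard n univ | {blk i, blk j} ⊆ S} * (n * b - 2).factorial := by
  rw [card_equiv equivSigma (t := {σ | (σ.2 k : Fin (N * b)) = i ∧ (σ.2 k' : Fin (N * b)) = j})
    (fun _ => by simp only [mem_filter, mem_univ, true_and]; exact Iff.rfl),
    ← univ_sigma_univ, filter_sigma, card_sigma]
  simp only [Equiv.card_filter_val_apply_eq_and_val_apply_eq
    (card_fin_eq_card_subtype_blk_mem hblk _) hk hij, Fintype.card_fin]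
  rw [sum_coe_sort (powersetCard n univ) fun S => if blk i ∈ S ∧ blk j ∈ S then _ else 0,
    sum_ite, sum_const_zero, add_zero, sum_const, smul_eq_mul]
  simp only [insert_subset_iff, singleton_subset_iff]

theorem prob_apply_eq_and_apply_eq (hnN : n ≤ N) (hnb : 2 ≤ n * b)
    (hblk : ∀ l, #(blockSet blk l) = b) {k k' : Fin (n * b)} (hk : k ≠ k') {i j : Fin (N * b)}
    (hij : i ≠ j) :
    (#{ω : CorgiShuffle N n b blk | ω.val.2 k = i ∧ ω.val.2 k' = j} : ℝ)
        / Fintype.card (CorgiShuffle N n b blk)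
      = (n.choose #{blk i, blk j} : ℝ) / N.choose #{blk i, blk j} / (n * b * (n * b - 1)) := by
  have hrN : #({blk i, blk j} : Finset (Fin N)) ≤ N := by
    simpa using card_le_univ ({blk i, blk j} : Finset (Fin N))
  obtain ⟨m, hm⟩ : ∃ m, n * b = m + 2 := ⟨n * b - 2, by omega⟩
  have hnb' : (n * b : ℝ) = m + 2 := by exact_mod_cast hm
  have hfact : ((n * b).factorial : ℝ) = n * b * (n * b - 1) * (n * b - 2).factorial := by
    rw [hnb', hm, Nat.add_sub_cancel, Nat.factorial_succ, Nat.factorial_succ]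
    push_cast
    ring
  have hNr : (N.choose #{blk i, blk j} : ℝ) ≠ 0 := by exact_mod_cast (Nat.choose_pos hrN).ne'
  have hNn : (N.choose n : ℝ) ≠ 0 := by exact_mod_cast (Nat.choose_pos hnN).ne'
  have hchoose := congrArg (Nat.cast (R := ℝ))
    (Nat.choose_mul_choose_eq_choose_mul_choose_sub_sub (r := #{blk i, blk j}) hnN)
  rw [card_filter_apply_eq_and_apply_eq hblk hk hij,
    card_filter_powersetCard_univ_subset _ (by simpa using hnN), card_eq hblk, Fintype.card_fin]
  push_cast at hchoose ⊢
  rw [hfact, hnb']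
  field_simp
  rw [hchoose, mul_comm]

end CorgiShuffle

/-- **Pairwise position probabilities of the CorgiPile shuffle.**
For distinct positions `k ≠ k'` and distinct indices `i ≠ j`:
(1) if `i` and `j` lie in the same block, `P(ψ(k)=i ∧ ψ(k')=j) = 1/(N·b·(nb−1))`;
(2) if they lie in different blocks, `P(ψ(k)=i ∧ ψ(k')=j) = (n−1)/(N·b·(N−1)·(nb−1))`;
moreover `P(ψ(k)=i ∧ ψ(k')=i) = 0`. -/
theorem corgi_shuffle_pairwise_probabilities {N n b : ℕ}
    (hN : 2 ≤ N) (hn1 : 1 ≤ n) (hnN : n ≤ N) (hnb : 2 ≤ n * b)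
    (blk : Fin (N * b) → Fin N)
    (hblk : ∀ l, (blockSet blk l).card = b)
    (k k' : Fin (n * b)) (hkk' : k ≠ k')
    (i j : Fin (N * b)) (hij : i ≠ j) :
    (blk i = blk j →
      ((Finset.univ.filter
          (fun ω : CorgiShuffle N n b blk => ω.val.2 k = i ∧ ω.val.2 k' = j)).card : ℝ) /
          (Fintype.card (CorgiShuffle N n b blk) : ℝ)
        = 1 / ((N : ℝ) * (b : ℝ) * ((n : ℝ) * (b : ℝ) - 1)))
    ∧ (blk i ≠ blk j →
      ((Finset.univ.filter
          (fun ω : CorgiShuffle N n b blk => ω.val.2 k = i ∧ ω.val.2 k' = j)).card : ℝ) /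
          (Fintype.card (CorgiShuffle N n b blk) : ℝ)
        = ((n : ℝ) - 1) / ((N : ℝ) * (b : ℝ) * ((N : ℝ) - 1) * ((n : ℝ) * (b : ℝ) - 1)))
    ∧ ((Finset.univ.filter
          (fun ω : CorgiShuffle N n b blk => ω.val.2 k = i ∧ ω.val.2 k' = i)).card : ℝ) /
          (Fintype.card (CorgiShuffle N n b blk) : ℝ) = 0 := by
  have hprob := CorgiShuffle.prob_apply_eq_and_apply_eq hnN hnb hblk hkk' hij
  have hn : (n : ℝ) ≠ 0 := Nat.cast_ne_zero.2 (by omega)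
  have hb : (b : ℝ) ≠ 0 := Nat.cast_ne_zero.2 (by rintro rfl; omega)
  have hnb1 : (n : ℝ) * b - 1 ≠ 0 := by
    have : (2 : ℝ) ≤ n * b := by exact_mod_cast hnb
    linarith
  have hN1 : (N : ℝ) - 1 ≠ 0 := by
    have : (2 : ℝ) ≤ N := by exact_mod_cast hN
    linarith
  refine ⟨fun h => ?_, fun h => ?_, ?_⟩
  · rw [hprob, h, pair_eq_singleton, card_singleton, Nat.choose_one_right, Nat.choose_one_right]
    field_simp
  · rw [hprob, card_pair h, Nat.cast_choose_two, Nat.cast_choose_two]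
    field_simp
  · rw [filter_false_of_mem fun ω _ h => hkk' (ω.2.2.1 (h.1.trans h.2.symm)), card_empty,
      Nat.cast_zero, zero_div]

end
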